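/- Let $p$ be a real polynomial on $\mathbb{C}$ of degree $D$, $c > 0$, and $\ell, m \ge 0$ integers. There exists $C$ (depending on $D, c, \ell, m$) and $c' \in (0, c)$ such that for all $s > 0$ and $z, \xi \in \mathbb{C}$: $e^{-c|z-\xi|^2/s}\,\Lambda(\xi, s^{1/2}) \le C\, e^{-c'|z-\xi|^2/s}\,\Lambda(z, s^{1/2})$, where $\Lambda(z,\delta) = \sum_{j,k\ge 1}|A_{jk}(z)|\delta^{j+k}$ and $A_{jk}(z) = \frac{1}{j!k!}\frac{\partial^{j+k}p(z)}{\partial z^j\partial\bar z^k}$. -/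

import Mathlib

open Finset

/-- The Wirtinger derivative `∂/∂z` of a function `f : ℂ → ℂ`. -/
noncomputable def WD (f : ℂ → ℂ) : ℂ → ℂ :=
  fun z => (fderiv ℝ f z 1 - Complex.I * fderiv ℝ f z Complex.I) / 2

/-- The Wirtinger derivative `∂/∂z̄` of a function `f : ℂ → ℂ`. -/
noncomputable def WDbar (f : ℂ → ℂ) : ℂ → ℂ :=
  fun z => (fderiv ℝ f z 1 + Complex.I * fderiv ℝ f z Complex.I) / 2

/-- The normalized mixed Taylor coefficient
`A_{jk}(z) = (1/(j! k!)) ∂^{j+k} p(z) / ∂z^j ∂z̄^k`. -/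
noncomputable def Acoef (p : ℂ → ℂ) (j k : ℕ) (z : ℂ) : ℂ :=
  (1 / ((Nat.factorial j : ℂ) * (Nat.factorial k : ℂ))) * (WD^[j] (WDbar^[k] p)) z

/-- `p` is a polynomial in `z` and `z̄` of degree at most `D` in each variable. -/
def IsCCPoly (p : ℂ → ℂ) (D : ℕ) : Prop :=
  ∃ a : ℕ → ℕ → ℂ, ∀ z : ℂ,
    p z = ∑ j ∈ range (D + 1), ∑ k ∈ range (D + 1), a j k * z ^ j * (starRingEnd ℂ z) ^ k

/-- `p` takes real values. -/
def IsRealValued (p : ℂ → ℂ) : Prop := ∀ z, (p z).im = 0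

/-- The twist term `T(w,z) = -2 Im ∑_{j≥1} (1/j!) ∂^j p(z)/∂z^j (w-z)^j`. -/
noncomputable def Ttwist (p : ℂ → ℂ) (D : ℕ) (w z : ℂ) : ℝ :=
  -2 * (∑ j ∈ Finset.Icc 1 D, Acoef p j 0 z * (w - z) ^ j).im

/-- `r(w,ξ,z) = 2 Im ∑_{j,k≥1} A_{jk}(ξ) (w-ξ)^j conj(z-ξ)^k`. -/
noncomputable def rtwist (p : ℂ → ℂ) (D : ℕ) (w ξ z : ℂ) : ℝ :=
  2 * (∑ j ∈ Finset.Icc 1 D, ∑ k ∈ Finset.Icc 1 D,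
    Acoef p j k ξ * (w - ξ) ^ j * (starRingEnd ℂ (z - ξ)) ^ k).im

/-- `e(w,ξ) = ∑_{j≥1} (1/j!) ∂^{j+1} p(ξ)/∂ξ^j ∂ξ̄ (w-ξ)^j`. -/
noncomputable def efun (p : ℂ → ℂ) (D : ℕ) (w ξ : ℂ) : ℂ :=
  ∑ j ∈ Finset.Icc 1 D, Acoef p j 1 ξ * (w - ξ) ^ j

/-- `Λ(z,δ) = ∑_{j,k ≥ 1} |A_{jk}(z)| δ^{j+k}`. -/
noncomputable def Lam (p : ℂ → ℂ) (D : ℕ) (z : ℂ) (δ : ℝ) : ℝ :=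
  ∑ j ∈ Finset.Icc 1 D, ∑ k ∈ Finset.Icc 1 D, ‖Acoef p j k z‖ * δ ^ (j + k)

/-- The weighted operator `Z_{τp} = ∂/∂z - τ (∂p/∂z)`. -/
noncomputable def Zop (p : ℂ → ℂ) (τ : ℝ) (f : ℂ → ℂ) : ℂ → ℂ :=
  fun z => WD f z - (τ : ℂ) * WD p z * f z

/-- The weighted operator `Z̄_{τp} = ∂/∂z̄ + τ (∂p/∂z̄)`. -/
noncomputable def Zbarop (p : ℂ → ℂ) (τ : ℝ) (f : ℂ → ℂ) : ℂ → ℂ :=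
  fun z => WDbar f z + (τ : ℂ) * WDbar p z * f z

/-- The weighted Laplacian `□_{τp} = -Z̄_{τp} Z_{τp}`. -/
noncomputable def BoxOp (p : ℂ → ℂ) (τ : ℝ) (f : ℂ → ℂ) : ℂ → ℂ :=
  fun z => -(Zbarop p τ (Zop p τ f) z)

/-- The twisted `τ`-derivative `M_{τp} = ∂/∂τ - i T(w,z)`, acting on functions of `(τ,z)`. -/
noncomputable def Mop (p : ℂ → ℂ) (D : ℕ) (w : ℂ) (F : ℝ → ℂ → ℂ) : ℝ → ℂ → ℂ :=
  fun τ z => deriv (fun σ => F σ z) τ - Complex.I * (Ttwist p D w z : ℂ) * F τ z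

/-! Each `A_{jk}` of a polynomial in `z, z̄` of bidegree `≤ (D, D)` is again such a polynomial, and
re-expanding it about `z` gives
`A_{jk}(ξ) = ∑_{α ≥ j, β ≥ k} C(α,j) C(β,k) A_{αβ}(z) (ξ - z)^{α-j} conj(ξ - z)^{β-k}`.
Writing `|ξ - z| = u √s`, each term of `Λ(ξ, √s)` is therefore at most `Λ(z, √s)` times `4^D u^r`
with `r ≤ 2D`, and `u^r e^{-c u²} ≤ K e^{-c u²/2}` absorbs the polynomial factor at the cost of
halving `c`. -/

open ComplexConjugate

section Wirtinger

variable {f : ℂ → ℂ} {L : ℂ →L[ℝ] ℂ} {z P Q : ℂ}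

lemma WD_eq_of_hasFDerivAt (hf : HasFDerivAt f L z) (hL : ∀ v, L v = P * v + Q * conj v) :
    WD f z = P := by
  simp only [WD, hf.fderiv, hL, map_one, Complex.conj_I]
  linear_combination (Q - P) / 2 * Complex.I_sq

lemma WDbar_eq_of_hasFDerivAt (hf : HasFDerivAt f L z) (hL : ∀ v, L v = P * v + Q * conj v) :
    WDbar f z = Q := by
  simp only [WDbar, hf.fderiv, hL, map_one, Complex.conj_I]
  linear_combination (P - Q) / 2 * Complex.I_sq

lemma hasFDerivAt_pow_mul_conj_pow (a b : ℕ) (z : ℂ) :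
    ∃ L : ℂ →L[ℝ] ℂ, HasFDerivAt (fun w => w ^ a * conj w ^ b) L z ∧
      ∀ v, L v = (a * z ^ (a - 1) * conj z ^ b) * v + (b * z ^ a * conj z ^ (b - 1)) * conj v := by
  have hpow := (hasDerivAt_pow a z).hasFDerivAt.restrictScalars ℝ
  have hconj := ((hasDerivAt_pow b (conj z)).hasFDerivAt.restrictScalars ℝ).comp z
    Complex.conjCLE.toContinuousLinearMap.hasFDerivAt
  refine ⟨_, hpow.mul hconj, fun v => ?_⟩
  simp only [add_apply, smul_apply, ContinuousLinearMap.comp_apply,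
    ContinuousLinearEquiv.coe_coe, ContinuousAlgEquiv.coeCLE_apply, Complex.conjCAE_apply,
    ContinuousLinearMap.coe_restrictScalars', ContinuousLinearMap.toSpanSingleton_apply, smul_eq_mul]
  ring

end Wirtinger

section CCPoly

variable {ι : Type*}

def ccPoly (s : Finset ι) (c : ι → ℂ) (e f : ι → ℕ) : ℂ → ℂ :=
  fun w => ∑ i ∈ s, c i * w ^ e i * conj w ^ f i

lemma hasFDerivAt_ccPoly (s : Finset ι) (c : ι → ℂ) (e f : ι → ℕ) (z : ℂ) :
    ∃ L : ℂ →L[ℝ] ℂ, HasFDerivAt (ccPoly s c e f) L z ∧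
      ∀ v, L v = (∑ i ∈ s, c i * e i * z ^ (e i - 1) * conj z ^ f i) * v
        + (∑ i ∈ s, c i * f i * z ^ e i * conj z ^ (f i - 1)) * conj v := by
  choose L hL hLv using fun i => hasFDerivAt_pow_mul_conj_pow (e i) (f i) z
  refine ⟨∑ i ∈ s, c i • L i, ?_, fun v => ?_⟩
  · refine HasFDerivAt.fun_sum fun i _ => ?_
    simpa only [mul_assoc] using (hL i).const_mul (c i)
  · simp only [_root_.sum_apply, smul_apply, hLv, smul_eq_mul,
      Finset.sum_mul, ← Finset.sum_add_distrib]
    exact Finset.sum_congr rfl fun i _ => by ring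

lemma WD_ccPoly (s : Finset ι) (c : ι → ℂ) (e f : ι → ℕ) :
    WD (ccPoly s c e f) = ccPoly s (fun i => c i * e i) (fun i => e i - 1) f := by
  funext z
  obtain ⟨L, hL, hLv⟩ := hasFDerivAt_ccPoly s c e f z
  exact WD_eq_of_hasFDerivAt hL hLv

lemma WDbar_ccPoly (s : Finset ι) (c : ι → ℂ) (e f : ι → ℕ) :
    WDbar (ccPoly s c e f) = ccPoly s (fun i => c i * f i) e (fun i => f i - 1) := by
  funext z
  obtain ⟨L, hL, hLv⟩ := hasFDerivAt_ccPoly s c e f z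
  rw [WDbar_eq_of_hasFDerivAt hL hLv]
  exact Finset.sum_congr rfl fun i _ => by ring

lemma iterate_WDbar_ccPoly (s : Finset ι) (c : ι → ℂ) (e f : ι → ℕ) (k : ℕ) :
    WDbar^[k] (ccPoly s c e f)
      = ccPoly s (fun i => c i * (f i).descFactorial k) e (fun i => f i - k) := by
  induction k with
  | zero => simp
  | succ k ih =>
    rw [Function.iterate_succ_apply', ih, WDbar_ccPoly]
    congr 1
    funext i
    rw [Nat.descFactorial_succ]
    push_cast
    ring

lemma iterate_WD_ccPoly (s : Finset ι) (c : ι → ℂ) (e f : ι → ℕ) (j : ℕ) :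
    WD^[j] (ccPoly s c e f)
      = ccPoly s (fun i => c i * (e i).descFactorial j) (fun i => e i - j) f := by
  induction j with
  | zero => simp
  | succ j ih =>
    rw [Function.iterate_succ_apply', ih, WD_ccPoly]
    congr 1
    funext i
    rw [Nat.descFactorial_succ]
    push_cast
    ring

lemma Acoef_ccPoly (s : Finset ι) (c : ι → ℂ) (e f : ι → ℕ) (j k : ℕ) (z : ℂ) :
    Acoef (ccPoly s c e f) j k z
      = ∑ i ∈ s, c i * (e i).choose j * (f i).choose k * z ^ (e i - j) * conj z ^ (f i - k) := by
  rw [Acoef, iterate_WDbar_ccPoly, iterate_WD_ccPoly, ccPoly, Finset.mul_sum]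
  refine Finset.sum_congr rfl fun i _ => ?_
  have hj : (j.factorial : ℂ) ≠ 0 := mod_cast j.factorial_ne_zero
  have hk : (k.factorial : ℂ) ≠ 0 := mod_cast k.factorial_ne_zero
  simp only [Nat.descFactorial_eq_factorial_mul_choose, Nat.cast_mul]
  field_simp

end CCPoly

lemma IsCCPoly.eq_ccPoly {p : ℂ → ℂ} {D : ℕ} (hp : IsCCPoly p D) :
    ∃ a : ℕ × ℕ → ℂ, p = ccPoly (range (D + 1) ×ˢ range (D + 1)) a Prod.fst Prod.snd := by
  obtain ⟨a, ha⟩ := hp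
  exact ⟨fun i => a i.1 i.2, funext fun w => by rw [ha, ccPoly, Finset.sum_product]⟩

lemma choose_mul_add_pow {R : Type*} [CommSemiring R] {n N : ℕ} (hn : n ≤ N) (j : ℕ) (x y : R) :
    (n.choose j : R) * (x + y) ^ (n - j)
      = ∑ i ∈ range (N + 1), (n.choose i * i.choose j : R) * x ^ (i - j) * y ^ (n - i) := by
  have hvanish : ∀ i ∈ range (N + 1), i ∉ Icc j n →
      (n.choose i * i.choose j : R) * x ^ (i - j) * y ^ (n - i) = 0 := by
    intro i _ hi
    rcases lt_or_ge i j with hij | hji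
    · simp [Nat.choose_eq_zero_of_lt hij]
    · simp [Nat.choose_eq_zero_of_lt (show n < i by simp at hi; omega)]
  rw [← Finset.sum_subset (fun i hi => by simp at hi ⊢; omega) hvanish]
  rcases lt_or_ge n j with hnj | hjn
  · simp [Nat.choose_eq_zero_of_lt hnj, Finset.Icc_eq_empty_of_lt hnj]
  rw [add_pow, Finset.mul_sum, ← Finset.Ico_add_one_right_eq_Icc, Finset.sum_Ico_eq_sum_range,
    show n + 1 - j = n - j + 1 by omega]
  refine Finset.sum_congr rfl fun ν hν => ?_
  have hν : ν ≤ n - j := by simp at hν; omega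
  have hchoose : n.choose (j + ν) * (j + ν).choose j = n.choose j * (n - j).choose ν := by
    simpa using Nat.choose_mul (n := n) (k := j + ν) (s := j) (by omega)
  rw [← Nat.cast_mul, hchoose, Nat.cast_mul, show j + ν - j = ν by omega,
    show n - (j + ν) = n - j - ν by omega]
  ring

lemma Acoef_add_eq_sum {p : ℂ → ℂ} {D : ℕ} (hp : IsCCPoly p D) (j k : ℕ) (z h : ℂ) :
    Acoef p j k (z + h) = ∑ i ∈ range (D + 1) ×ˢ range (D + 1),
      (i.1.choose j * i.2.choose k : ℂ) * Acoef p i.1 i.2 z * h ^ (i.1 - j)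
        * conj h ^ (i.2 - k) := by
  obtain ⟨a, rfl⟩ := hp.eq_ccPoly
  simp only [Acoef_ccPoly, Finset.mul_sum, Finset.sum_mul]
  rw [Finset.sum_comm]
  refine Finset.sum_congr rfl fun i hi => ?_
  obtain ⟨hi₁, hi₂⟩ : i.1 ≤ D ∧ i.2 ≤ D := by simp at hi; omega
  calc a i * i.1.choose j * i.2.choose k * (z + h) ^ (i.1 - j) * conj (z + h) ^ (i.2 - k)
      = a i * ((i.1.choose j * (h + z) ^ (i.1 - j))
          * (i.2.choose k * (conj h + conj z) ^ (i.2 - k))) := by rw [map_add]; ring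
    _ = _ := by
      rw [choose_mul_add_pow hi₁, choose_mul_add_pow hi₂, Finset.sum_mul_sum, Finset.sum_product,
        Finset.mul_sum]
      refine Finset.sum_congr rfl fun _ _ => ?_
      rw [Finset.mul_sum]
      exact Finset.sum_congr rfl fun _ _ => by ring

lemma pow_le_mul_exp_sq {c u : ℝ} (hc : 0 < c) (hu : 0 ≤ u) {r N : ℕ} (hr : r ≤ 2 * N) :
    u ^ r ≤ (1 + N.factorial / c ^ N) * Real.exp (c * u ^ 2) := by
  have hsmall : u ^ r ≤ 1 + (u ^ 2) ^ N := by
    rcases le_total u 1 with hu1 | hu1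
    · linarith [pow_le_one₀ hu hu1 (n := r), pow_nonneg (sq_nonneg u) N]
    · rw [← pow_mul]
      linarith [pow_le_pow_right₀ hu1 hr]
  have hlarge : (u ^ 2) ^ N ≤ N.factorial / c ^ N * Real.exp (c * u ^ 2) := by
    have h := Real.pow_div_factorial_le_exp (c * u ^ 2) (by positivity) N
    rw [mul_pow, div_le_iff₀ (by positivity)] at h
    rw [div_mul_eq_mul_div, le_div_iff₀ (by positivity)]
    linarith
  have hone : 1 ≤ Real.exp (c * u ^ 2) := Real.one_le_exp (by positivity)
  nlinarith

lemma pow_mul_exp_sq_le {c u : ℝ} (hc : 0 < c) (hu : 0 ≤ u) {r N : ℕ} (hr : r ≤ 2 * N) :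
    u ^ r * Real.exp (-c * u ^ 2)
      ≤ (1 + N.factorial / (c / 2) ^ N) * Real.exp (-(c / 2) * u ^ 2) := by
  have h := mul_le_mul_of_nonneg_right (pow_le_mul_exp_sq (half_pos hc) hu hr)
    (Real.exp_pos (-c * u ^ 2)).le
  rwa [mul_assoc, ← Real.exp_add, show c / 2 * u ^ 2 + -c * u ^ 2 = -(c / 2) * u ^ 2 by ring] at h

lemma choose_mul_pow_mul_pow_le {n N : ℕ} (hn : n ≤ N) (j : ℕ) {u δ : ℝ} (hu : 0 ≤ u)
    (hδ : 0 ≤ δ) : n.choose j * (u * δ) ^ (n - j) * δ ^ j ≤ 2 ^ N * u ^ (n - j) * δ ^ n := by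
  rcases lt_or_ge n j with hnj | hjn
  · simp only [Nat.choose_eq_zero_of_lt hnj, Nat.cast_zero, zero_mul]
    positivity
  have hchoose : (n.choose j : ℝ) ≤ 2 ^ N :=
    mod_cast (Nat.choose_le_two_pow n j).trans (Nat.pow_le_pow_right two_pos hn)
  calc n.choose j * (u * δ) ^ (n - j) * δ ^ j = n.choose j * (u ^ (n - j) * δ ^ n) := by
        rw [mul_pow, ← pow_sub_mul_pow δ hjn]
        ring
    _ ≤ 2 ^ N * (u ^ (n - j) * δ ^ n) := by gcongr
    _ = 2 ^ N * u ^ (n - j) * δ ^ n := by ring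

lemma norm_Acoef_add_le {p : ℂ → ℂ} {D : ℕ} (hp : IsCCPoly p D) {j k : ℕ} (hj : 1 ≤ j)
    (hk : 1 ≤ k) (z h : ℂ) :
    ‖Acoef p j k (z + h)‖ ≤ ∑ i ∈ Icc 1 D ×ˢ Icc 1 D,
      i.1.choose j * i.2.choose k * ‖Acoef p i.1 i.2 z‖ * ‖h‖ ^ (i.1 - j) * ‖h‖ ^ (i.2 - k) := by
  have hvanish : ∀ i ∈ range (D + 1) ×ˢ range (D + 1), i ∉ Icc 1 D ×ˢ Icc 1 D →
      (i.1.choose j * i.2.choose k : ℝ) * ‖Acoef p i.1 i.2 z‖ * ‖h‖ ^ (i.1 - j)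
        * ‖h‖ ^ (i.2 - k) = 0 := by
    intro i hi hi'
    simp only [Finset.mem_product, Finset.mem_range, Finset.mem_Icc] at hi hi'
    rcases Nat.eq_zero_or_pos i.1 with h1 | h1
    · simp [h1, Nat.choose_eq_zero_of_lt (show 0 < j by omega)]
    · simp [Nat.choose_eq_zero_of_lt (show i.2 < k by omega)]
  rw [Finset.sum_subset (fun i hi => by simp at hi ⊢; omega) hvanish, Acoef_add_eq_sum hp]
  refine (norm_sum_le _ _).trans (Finset.sum_le_sum fun i _ => ?_)
  simp only [norm_mul, norm_pow, Complex.norm_conj, Complex.norm_natCast, le_refl]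

lemma exp_mul_choose_mul_pow_le {c u δ : ℝ} (hc : 0 < c) (hu : 0 ≤ u) (hδ : 0 ≤ δ)
    {α β D : ℕ} (hα : α ≤ D) (hβ : β ≤ D) (j k : ℕ) :
    Real.exp (-c * u ^ 2) * ((α.choose j * (u * δ) ^ (α - j) * δ ^ j)
        * (β.choose k * (u * δ) ^ (β - k) * δ ^ k))
      ≤ 4 ^ D * (1 + D.factorial / (c / 2) ^ D) * Real.exp (-(c / 2) * u ^ 2) * δ ^ (α + β) := by
  have hr : α - j + (β - k) ≤ 2 * D := by omega
  calc Real.exp (-c * u ^ 2) * ((α.choose j * (u * δ) ^ (α - j) * δ ^ j)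
          * (β.choose k * (u * δ) ^ (β - k) * δ ^ k))
      ≤ Real.exp (-c * u ^ 2)
          * ((2 ^ D * u ^ (α - j) * δ ^ α) * (2 ^ D * u ^ (β - k) * δ ^ β)) := by
        refine mul_le_mul_of_nonneg_left (mul_le_mul ?_ ?_ (by positivity) (by positivity))
          (Real.exp_pos _).le
        · exact choose_mul_pow_mul_pow_le hα j hu hδ
        · exact choose_mul_pow_mul_pow_le hβ k hu hδ
    _ = 4 ^ D * (u ^ (α - j + (β - k)) * Real.exp (-c * u ^ 2)) * δ ^ (α + β) := by
        rw [show (4 : ℝ) ^ D = 2 ^ D * 2 ^ D by rw [← mul_pow]; norm_num]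
        ring
    _ ≤ 4 ^ D * ((1 + D.factorial / (c / 2) ^ D) * Real.exp (-(c / 2) * u ^ 2)) * δ ^ (α + β) := by
        gcongr 4 ^ D * ?_ * _
        exact pow_mul_exp_sq_le hc hu hr
    _ = _ := by ring

lemma exp_mul_norm_Acoef_add_mul_pow_le {p : ℂ → ℂ} {D : ℕ} (hp : IsCCPoly p D) {c : ℝ}
    (hc : 0 < c) {j k : ℕ} (hj : 1 ≤ j) (hk : 1 ≤ k) (z h : ℂ) {δ : ℝ} (hδ : 0 < δ) :
    Real.exp (-c * (‖h‖ / δ) ^ 2) * (‖Acoef p j k (z + h)‖ * δ ^ (j + k))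
      ≤ 4 ^ D * (1 + D.factorial / (c / 2) ^ D) * Real.exp (-(c / 2) * (‖h‖ / δ) ^ 2)
        * Lam p D z δ := by
  set u := ‖h‖ / δ
  have hu : 0 ≤ u := by positivity
  have hh : ‖h‖ = u * δ := (div_mul_cancel₀ _ hδ.ne').symm
  rw [Lam, ← Finset.sum_product', Finset.mul_sum]
  calc Real.exp (-c * u ^ 2) * (‖Acoef p j k (z + h)‖ * δ ^ (j + k))
      ≤ Real.exp (-c * u ^ 2) * (δ ^ (j + k) * ∑ i ∈ Icc 1 D ×ˢ Icc 1 D,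
          i.1.choose j * i.2.choose k * ‖Acoef p i.1 i.2 z‖ * ‖h‖ ^ (i.1 - j)
            * ‖h‖ ^ (i.2 - k)) := by
        rw [mul_comm _ (δ ^ _)]
        gcongr
        exact norm_Acoef_add_le hp hj hk z h
    _ ≤ _ := by
      rw [Finset.mul_sum, Finset.mul_sum]
      refine Finset.sum_le_sum fun i hi => ?_
      simp only [Finset.mem_product, Finset.mem_Icc] at hi
      have hweight := exp_mul_choose_mul_pow_le hc hu hδ.le hi.1.2 hi.2.2 j k
      rw [hh]
      calc Real.exp (-c * u ^ 2) * (δ ^ (j + k) * (i.1.choose j * i.2.choose k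
              * ‖Acoef p i.1 i.2 z‖ * (u * δ) ^ (i.1 - j) * (u * δ) ^ (i.2 - k)))
          = ‖Acoef p i.1 i.2 z‖ * (Real.exp (-c * u ^ 2)
              * ((i.1.choose j * (u * δ) ^ (i.1 - j) * δ ^ j)
                * (i.2.choose k * (u * δ) ^ (i.2 - k) * δ ^ k))) := by ring
        _ ≤ ‖Acoef p i.1 i.2 z‖ * (4 ^ D * (1 + D.factorial / (c / 2) ^ D)
              * Real.exp (-(c / 2) * u ^ 2) * δ ^ (i.1 + i.2)) := by gcongr
        _ = _ := by ring

lemma Lam_nonneg (p : ℂ → ℂ) (D : ℕ) (z : ℂ) {δ : ℝ} (hδ : 0 ≤ δ) : 0 ≤ Lam p D z δ :=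
  Finset.sum_nonneg fun _ _ => Finset.sum_nonneg fun _ _ => by positivity

lemma exp_mul_Lam_add_le {p : ℂ → ℂ} {D : ℕ} (hp : IsCCPoly p D) {c : ℝ} (hc : 0 < c)
    (z h : ℂ) {δ : ℝ} (hδ : 0 < δ) :
    Real.exp (-c * (‖h‖ / δ) ^ 2) * Lam p D (z + h) δ
      ≤ D ^ 2 * (4 ^ D * (1 + D.factorial / (c / 2) ^ D))
        * (Real.exp (-(c / 2) * (‖h‖ / δ) ^ 2) * Lam p D z δ) := by
  calc Real.exp (-c * (‖h‖ / δ) ^ 2) * Lam p D (z + h) δ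
      = ∑ j ∈ Icc 1 D, ∑ k ∈ Icc 1 D,
          Real.exp (-c * (‖h‖ / δ) ^ 2) * (‖Acoef p j k (z + h)‖ * δ ^ (j + k)) := by
        simp only [Lam, Finset.mul_sum]
    _ ≤ ∑ j ∈ Icc 1 D, ∑ k ∈ Icc 1 D, 4 ^ D * (1 + D.factorial / (c / 2) ^ D)
          * Real.exp (-(c / 2) * (‖h‖ / δ) ^ 2) * Lam p D z δ := by
        refine Finset.sum_le_sum fun j hj => Finset.sum_le_sum fun k hk => ?_
        simp only [Finset.mem_Icc] at hj hk
        exact exp_mul_norm_Acoef_add_mul_pow_le hp hc hj.1 hk.1 z h hδ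
    _ = _ := by
        simp only [Finset.sum_const, Nat.card_Icc, nsmul_eq_mul, add_tsub_cancel_right]
        ring

theorem Lam_replacement_general (D : ℕ) (c : ℝ) (hc : 0 < c) :
    ∃ C : ℝ, 0 < C ∧ ∃ c' : ℝ, 0 < c' ∧ c' < c ∧
      ∀ p : ℂ → ℂ, IsCCPoly p D → IsRealValued p →
        ∀ s : ℝ, 0 < s → ∀ z ξ : ℂ,
          Real.exp (-c * ‖z - ξ‖ ^ 2 / s) * Lam p D ξ (Real.sqrt s) ≤
            C * (Real.exp (-c' * ‖z - ξ‖ ^ 2 / s) * Lam p D z (Real.sqrt s)) := by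
  set M := D ^ 2 * (4 ^ D * (1 + D.factorial / (c / 2) ^ D))
  refine ⟨M + 1, by positivity, c / 2, half_pos hc, half_lt_self hc, ?_⟩
  intro p hp _ s hs z ξ
  have hδ : 0 < Real.sqrt s := Real.sqrt_pos.2 hs
  have hscale : ‖z - ξ‖ ^ 2 / s = (‖ξ - z‖ / Real.sqrt s) ^ 2 := by
    rw [div_pow, Real.sq_sqrt hs.le, norm_sub_rev]
  have key := exp_mul_Lam_add_le hp hc z (ξ - z) hδ
  rw [add_sub_cancel] at key
  rw [mul_div_assoc, mul_div_assoc, hscale]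
  have hnonneg := mul_nonneg (Real.exp_pos (-(c / 2) * (‖ξ - z‖ / Real.sqrt s) ^ 2)).le
    (Lam_nonneg p D z hδ.le)
  linarith

/-- With a loss in the exponential constant, `Λ(ξ, √s)` may be replaced by `Λ(z, √s)`:
there are `C` and `0 < c' < c`, depending only on `deg p`, `c`, `ℓ`, `m`, so that
`e^{-c|z-ξ|²/s} Λ(ξ, s^{1/2}) ≤ C e^{-c'|z-ξ|²/s} Λ(z, s^{1/2})`. -/
theorem Lam_replacement (D : ℕ) (c : ℝ) (hc : 0 < c) (ℓ m : ℕ) :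
    ∃ C : ℝ, 0 < C ∧ ∃ c' : ℝ, 0 < c' ∧ c' < c ∧
      ∀ p : ℂ → ℂ, IsCCPoly p D → IsRealValued p →
        ∀ s : ℝ, 0 < s → ∀ z ξ : ℂ,
          Real.exp (-c * ‖z - ξ‖ ^ 2 / s) * Lam p D ξ (Real.sqrt s) ≤
            C * (Real.exp (-c' * ‖z - ξ‖ ^ 2 / s) * Lam p D z (Real.sqrt s)) :=
  Lam_replacement_general D c hc
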